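/- For all natural numbers n, k and parameters α, λ in a field of characteristic zero, Σ_{j=0}^{k} α^{k-j} s(k,j) λ^j j^n = Σ_{ℓ=0}^{k} (-1)_{k-ℓ,α} · ℓ! · C(k,ℓ) · y*_{1,α}(n,ℓ;λ), where (-1)_{m,α} = ∏_{i=0}^{m-1}(-1 - iα). -/

import Mathlib

open Finset

/-- The degenerate falling factorial `(x)_{n,α} = ∏_{i=0}^{n-1} (x - i·α)`. -/
def degFall {R : Type*} [CommRing R] (α x : R) (n : ℕ) : R :=
  ∏ i ∈ Finset.range n, (x - (i : R) * α)

/-- The ordinary falling factorial `(x)_n = x(x-1)⋯(x-n+1)`. -/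
def fall {R : Type*} [CommRing R] (x : R) (n : ℕ) : R :=
  ∏ i ∈ Finset.range n, (x - (i : R))

/-- Signed Stirling numbers of the first kind, via the standard recurrence. -/
def stirling1 : ℕ → ℕ → ℤ
  | 0, 0 => 1
  | 0, _ + 1 => 0
  | n + 1, 0 => -(n : ℤ) * stirling1 n 0
  | n + 1, k + 1 => stirling1 n k - (n : ℤ) * stirling1 n (k + 1)

/-- The Simsek numbers `y₁(n,k;λ) = (1/k!) Σ_{j=0}^{k} C(k,j) jⁿ λʲ`. -/
noncomputable def simsek {F : Type*} [Field F] (lam : F) (n k : ℕ) : F :=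
  (k.factorial : F)⁻¹ * ∑ j ∈ Finset.range (k + 1),
    (k.choose j : F) * (j : F) ^ n * lam ^ j

/-- The new type degenerate Simsek numbers
`y*₁,α(n,k;λ) = (1/k!) Σ_{ℓ=0}^{k} Σ_{j=0}^{ℓ} C(ℓ,j) α^{k-ℓ} s(k,ℓ) λʲ jⁿ`. -/
noncomputable def ystar {F : Type*} [Field F] (α lam : F) (n k : ℕ) : F :=
  (k.factorial : F)⁻¹ * ∑ ℓ ∈ Finset.range (k + 1), ∑ j ∈ Finset.range (ℓ + 1),
    (ℓ.choose j : F) * α ^ (k - ℓ) * ((stirling1 k ℓ : ℤ) : F) * lam ^ j * (j : F) ^ n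

lemma stirling1_eq_zero : ∀ k j : ℕ, k < j → stirling1 k j = 0
  | 0, _ + 1, _ => rfl
  | n + 1, k + 1, h => by
      rw [stirling1, stirling1_eq_zero n k (by omega), stirling1_eq_zero n (k+1) (by omega)]
      ring

lemma degFall_succ {R : Type*} [CommRing R] (α x : R) (n : ℕ) :
    degFall α x (n + 1) = degFall α x n * (x - (n : R) * α) := by
  simp [degFall, Finset.prod_range_succ]

lemma degFall_eq_sum {R : Type*} [CommRing R] (α x : R) (k : ℕ) :
    degFall α x k = ∑ j ∈ Finset.range (k + 1),
      α ^ (k - j) * ((stirling1 k j : ℤ) : R) * x ^ j := by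
  induction k with
  | zero => simp [degFall, stirling1]
  | succ k ih =>
      rw [degFall_succ, ih]
      rw [Finset.sum_range_succ' (fun j => α ^ (k + 1 - j) * ((stirling1 (k+1) j : ℤ) : R) * x ^ j) (k+1)]
      have hs : ∀ j, stirling1 (k+1) (j+1) = stirling1 k j - (k : ℤ) * stirling1 k (j+1) := fun j => rfl
      rw [Finset.sum_mul]
      have expand : ∀ j ∈ Finset.range (k+1),
          α ^ (k - j) * ((stirling1 k j : ℤ) : R) * x ^ j * (x - (k : R) * α)
          = α ^ (k - j) * ((stirling1 k j : ℤ) : R) * x ^ (j+1)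
            - (k : R) * (α ^ (k - j) * α) * ((stirling1 k j : ℤ) : R) * x ^ j := by
        intro j hj; ring
      rw [Finset.sum_congr rfl expand, Finset.sum_sub_distrib]
      have step1 : ∀ j ∈ Finset.range (k+1),
          α ^ (k + 1 - (j+1)) * ((stirling1 (k+1) (j+1) : ℤ) : R) * x ^ (j+1)
          = α ^ (k - j) * ((stirling1 k j : ℤ) : R) * x ^ (j+1)
            - (k : R) * (α ^ (k - j) * ((stirling1 k (j+1) : ℤ) : R)) * x ^ (j+1) := by
        intro j hj
        rw [hs, Nat.succ_sub_succ]
        push_cast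
        ring
      rw [Finset.sum_congr rfl step1, Finset.sum_sub_distrib]
      have h0 : stirling1 (k+1) 0 = -(k : ℤ) * stirling1 k 0 := by
        cases k <;> rfl
      have key2 : (∑ j ∈ Finset.range (k+1), (k:R) * (α^(k-j) * α) * ((stirling1 k j : ℤ):R) * x^j)
          = (∑ j ∈ Finset.range (k+1), (k : R) * (α^(k-j) * ((stirling1 k (j+1) : ℤ):R)) * x^(j+1))
            + (k:R) * (α^(k-0) * α) * ((stirling1 k 0 : ℤ):R) * x^0 := by
        rw [Finset.sum_range_succ' (fun j => (k:R) * (α^(k-j) * α) * ((stirling1 k j : ℤ):R) * x^j) k]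
        rw [Finset.sum_range_succ (fun j => (k : R) * (α^(k-j) * ((stirling1 k (j+1) : ℤ):R)) * x^(j+1)) k]
        rw [stirling1_eq_zero k (k+1) (by omega)]
        simp only [Int.cast_zero, mul_zero, zero_mul, add_zero]
        congr 1
        apply Finset.sum_congr rfl
        intro j hj
        have hj' : j < k := Finset.mem_range.mp hj
        have he : k - (j+1) + 1 = k - j := by omega
        rw [← he, pow_succ]
        ring
      rw [key2, h0]
      simp only [Nat.sub_zero]
      push_cast
      ring

lemma degFall_add {R : Type*} [CommRing R] (α x y : R) (k : ℕ) :
    degFall α (x + y) k = ∑ ℓ ∈ Finset.range (k + 1),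
      (k.choose ℓ : R) * degFall α x ℓ * degFall α y (k - ℓ) := by
  induction k with
  | zero => simp [degFall]
  | succ k ih =>
      rw [degFall_succ, ih, Finset.sum_mul]
      rw [Finset.sum_range_succ' (fun ℓ => (((k+1).choose ℓ : ℕ) : R) * degFall α x ℓ * degFall α y (k+1-ℓ)) (k+1)]
      have hsplit : ∀ ℓ ∈ Finset.range (k+1),
          (((k+1).choose (ℓ+1) : ℕ) : R) * degFall α x (ℓ+1) * degFall α y (k+1-(ℓ+1))
          = (k.choose ℓ : R) * (degFall α x ℓ * (x - (ℓ : R) * α)) * degFall α y (k-ℓ)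
            + (k.choose (ℓ+1) : R) * degFall α x (ℓ+1) * degFall α y (k-ℓ) := by
        intro ℓ hℓ
        rw [Nat.succ_sub_succ, Nat.choose_succ_succ, degFall_succ]
        push_cast
        ring
      rw [Finset.sum_congr rfl hsplit, Finset.sum_add_distrib]
      have hB : (∑ ℓ ∈ Finset.range (k+1), (k.choose (ℓ+1) : R) * degFall α x (ℓ+1) * degFall α y (k-ℓ))
            + (((k+1).choose 0 : ℕ) : R) * degFall α x 0 * degFall α y (k+1-0)
          = ∑ ℓ ∈ Finset.range (k+1),
              (k.choose ℓ : R) * degFall α x ℓ * (degFall α y (k-ℓ) * (y - ((k - ℓ : ℕ) : R) * α)) := by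
        have h1 : (∑ ℓ ∈ Finset.range (k+1), (k.choose (ℓ+1) : R) * degFall α x (ℓ+1) * degFall α y (k-ℓ))
              + (((k+1).choose 0 : ℕ) : R) * degFall α x 0 * degFall α y (k+1-0)
            = ∑ ℓ ∈ Finset.range (k+2), (k.choose ℓ : R) * degFall α x ℓ * degFall α y (k+1-ℓ) := by
          rw [Finset.sum_range_succ' (fun ℓ => (k.choose ℓ : R) * degFall α x ℓ * degFall α y (k+1-ℓ)) (k+1)]
          congr 1
          · apply Finset.sum_congr rfl
            intro ℓ hℓ
            rw [Nat.succ_sub_succ]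
          · simp
        rw [h1, Finset.sum_range_succ, Nat.choose_succ_self]
        simp only [Nat.cast_zero, zero_mul, add_zero]
        apply Finset.sum_congr rfl
        intro ℓ hℓ
        have he : k + 1 - ℓ = (k - ℓ) + 1 := by
          have := Finset.mem_range.mp hℓ; omega
        rw [he, degFall_succ]
      rw [add_assoc, hB, ← Finset.sum_add_distrib]
      apply Finset.sum_congr rfl
      intro ℓ hℓ
      have hℓ' : ℓ ≤ k := by have := Finset.mem_range.mp hℓ; omega
      rw [Nat.cast_sub hℓ']
      ring

lemma degFall_map {R S : Type*} [CommRing R] [CommRing S] (f : R →+* S) (α x : R) (n : ℕ) :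
    degFall (f α) (f x) n = f (degFall α x n) := by
  unfold degFall
  rw [map_prod]
  apply Finset.prod_congr rfl
  intro i _
  simp [map_sub, map_mul, map_natCast]

lemma coeff_sum_CX {F : Type*} [Field F] (c : ℕ → F) (N j : ℕ) (hj : j < N) :
    (∑ i ∈ Finset.range N, Polynomial.C (c i) * Polynomial.X ^ i).coeff j = c j := by
  rw [Polynomial.finset_sum_coeff]
  simp only [Polynomial.coeff_C_mul, Polynomial.coeff_X_pow, mul_ite, mul_one, mul_zero]
  rw [Finset.sum_ite_eq (Finset.range N) j c]
  simp [hj]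

open Polynomial in
lemma expand_ell {F : Type*} [Field F] (α : F) (k ℓ : ℕ) (hℓ : ℓ < k + 1) :
    ((k.choose ℓ : ℕ) : Polynomial F) * degFall (Polynomial.C α) (Polynomial.X + 1) ℓ
        * Polynomial.C (degFall α (-1) (k - ℓ))
    = ∑ j ∈ Finset.range (k + 1), Polynomial.C (∑ m ∈ Finset.range (k + 1),
        degFall α (-1) (k - ℓ) * (k.choose ℓ : F)
          * (α ^ (ℓ - m) * ((stirling1 ℓ m : ℤ) : F) * (m.choose j : F))) * Polynomial.X ^ j := by
  have h1 : degFall (Polynomial.C α) (Polynomial.X + 1) ℓ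
      = ∑ m ∈ Finset.range (ℓ + 1), ∑ j ∈ Finset.range (k + 1),
          Polynomial.C (α ^ (ℓ - m) * ((stirling1 ℓ m : ℤ) : F) * (m.choose j : F)) * Polynomial.X ^ j := by
    rw [degFall_eq_sum]
    apply Finset.sum_congr rfl
    intro m hm
    have hm' : m + 1 ≤ k + 1 := by have := Finset.mem_range.mp hm; omega
    have hpow : (Polynomial.X + 1 : Polynomial F) ^ m
        = ∑ j ∈ Finset.range (k + 1), ((m.choose j : ℕ) : Polynomial F) * Polynomial.X ^ j := by
      rw [add_pow]
      rw [Finset.sum_subset (Finset.range_subset_range.mpr hm')]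
      · apply Finset.sum_congr rfl
        intro j _
        ring
      · intro j _ hj
        have : m < j := by simp only [Finset.mem_range] at *; omega
        rw [Nat.choose_eq_zero_of_lt this]
        simp
    rw [hpow, Finset.mul_sum]
    apply Finset.sum_congr rfl
    intro j _
    have hc : ((stirling1 ℓ m : ℤ) : Polynomial F) = Polynomial.C ((stirling1 ℓ m : ℤ) : F) := by
      simp
    have hc2 : ((m.choose j : ℕ) : Polynomial F) = Polynomial.C ((m.choose j : ℕ) : F) := by
      simp
    rw [hc, hc2, ← Polynomial.C_pow]
    ring_nf
    rw [← Polynomial.C_mul, ← Polynomial.C_mul]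
    ring_nf
  have h2 : degFall (Polynomial.C α) (Polynomial.X + 1) ℓ
      = ∑ m ∈ Finset.range (k + 1), ∑ j ∈ Finset.range (k + 1),
          Polynomial.C (α ^ (ℓ - m) * ((stirling1 ℓ m : ℤ) : F) * (m.choose j : F)) * Polynomial.X ^ j := by
    rw [h1, Finset.sum_subset (Finset.range_subset_range.mpr hℓ)]
    intro m _ hm
    have : ℓ < m := by simp only [Finset.mem_range] at *; omega
    rw [stirling1_eq_zero ℓ m this]
    simp
  rw [h2, Finset.sum_comm, Finset.mul_sum, Finset.sum_mul]
  apply Finset.sum_congr rfl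
  intro j _
  rw [Finset.mul_sum, Finset.sum_mul, map_sum, Finset.sum_mul]
  apply Finset.sum_congr rfl
  intro m _
  have hc3 : ((k.choose ℓ : ℕ) : Polynomial F) = Polynomial.C ((k.choose ℓ : ℕ) : F) := by simp
  rw [hc3]
  simp only [Polynomial.C_mul]
  ring

open Polynomial in
lemma key_ident {F : Type*} [Field F] (α : F) (k j : ℕ) (hj : j < k + 1) :
    α ^ (k - j) * ((stirling1 k j : ℤ) : F)
    = ∑ ℓ ∈ Finset.range (k + 1), ∑ m ∈ Finset.range (k + 1),
        degFall α (-1) (k - ℓ) * (k.choose ℓ : F)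
          * (α ^ (ℓ - m) * ((stirling1 ℓ m : ℤ) : F) * (m.choose j : F)) := by
  have hneg : ∀ r : ℕ, degFall (Polynomial.C α) (-1 : Polynomial F) r
      = Polynomial.C (degFall α (-1) r) := by
    intro r
    rw [show (-1 : Polynomial F) = Polynomial.C (-1) by simp]
    exact degFall_map (Polynomial.C : F →+* Polynomial F) α (-1) r
  have hpoly : (∑ i ∈ Finset.range (k + 1),
        Polynomial.C (α ^ (k - i) * ((stirling1 k i : ℤ) : F)) * Polynomial.X ^ i)
      = ∑ i ∈ Finset.range (k + 1), Polynomial.C (∑ ℓ ∈ Finset.range (k + 1),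
          ∑ m ∈ Finset.range (k + 1), degFall α (-1) (k - ℓ) * (k.choose ℓ : F)
            * (α ^ (ℓ - m) * ((stirling1 ℓ m : ℤ) : F) * (m.choose i : F)))
          * Polynomial.X ^ i := by
    have ha : (∑ i ∈ Finset.range (k + 1),
          Polynomial.C (α ^ (k - i) * ((stirling1 k i : ℤ) : F)) * Polynomial.X ^ i)
        = degFall (Polynomial.C α) (Polynomial.X : Polynomial F) k := by
      rw [degFall_eq_sum]
      apply Finset.sum_congr rfl
      intro i _
      have : ((stirling1 k i : ℤ) : Polynomial F) = Polynomial.C ((stirling1 k i : ℤ) : F) := by simp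
      rw [this, ← Polynomial.C_pow, ← Polynomial.C_mul]
    rw [ha]
    have hb := degFall_add (Polynomial.C α) (Polynomial.X + 1) (-1 : Polynomial F) k
    rw [show (Polynomial.X + 1 + (-1) : Polynomial F) = Polynomial.X by ring] at hb
    rw [hb]
    have hc : ∀ ℓ ∈ Finset.range (k + 1),
        ((k.choose ℓ : ℕ) : Polynomial F) * degFall (Polynomial.C α) (Polynomial.X + 1) ℓ
          * degFall (Polynomial.C α) (-1 : Polynomial F) (k - ℓ)
        = ∑ i ∈ Finset.range (k + 1), Polynomial.C (∑ m ∈ Finset.range (k + 1),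
            degFall α (-1) (k - ℓ) * (k.choose ℓ : F)
              * (α ^ (ℓ - m) * ((stirling1 ℓ m : ℤ) : F) * (m.choose i : F))) * Polynomial.X ^ i := by
      intro ℓ hℓ
      rw [hneg]
      exact expand_ell α k ℓ (Finset.mem_range.mp hℓ)
    rw [Finset.sum_congr rfl hc, Finset.sum_comm]
    apply Finset.sum_congr rfl
    intro i _
    rw [← Finset.sum_mul, ← map_sum]
  have := congrArg (fun p => Polynomial.coeff p j) hpoly
  simpa only [coeff_sum_CX _ _ j hj] using this


/-- the inversion relation
`Σ_{j=0}^{k} α^{k-j} s(k,j) λʲ jⁿ = Σ_{ℓ=0}^{k} (-1)_{k-ℓ,α} ℓ! C(k,ℓ) y*₁,α(n,ℓ;λ)`. -/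
theorem stirling1_sum_eq_degFall_neg_one_sum_ystar (F : Type*) [Field F] [CharZero F]
    (α lam : F) (n k : ℕ) :
    ∑ j ∈ Finset.range (k + 1),
        α ^ (k - j) * ((stirling1 k j : ℤ) : F) * lam ^ j * (j : F) ^ n =
    ∑ ℓ ∈ Finset.range (k + 1),
        degFall α (-1) (k - ℓ) * (ℓ.factorial : F) * (k.choose ℓ : F) * ystar α lam n ℓ := by
  have step1 : ∀ ℓ ∈ Finset.range (k + 1),
      degFall α (-1) (k - ℓ) * (ℓ.factorial : F) * (k.choose ℓ : F) * ystar α lam n ℓ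
      = ∑ m ∈ Finset.range (k + 1), ∑ j ∈ Finset.range (k + 1),
          degFall α (-1) (k - ℓ) * (k.choose ℓ : F)
            * ((m.choose j : F) * α ^ (ℓ - m) * ((stirling1 ℓ m : ℤ) : F) * lam ^ j * (j : F) ^ n) := by
    intro ℓ hℓ
    have hℓk : ℓ < k + 1 := Finset.mem_range.mp hℓ
    rw [ystar]
    have hS : (∑ m ∈ Finset.range (ℓ + 1), ∑ j ∈ Finset.range (m + 1),
          (m.choose j : F) * α ^ (ℓ - m) * ((stirling1 ℓ m : ℤ) : F) * lam ^ j * (j : F) ^ n)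
        = ∑ m ∈ Finset.range (k + 1), ∑ j ∈ Finset.range (k + 1),
          (m.choose j : F) * α ^ (ℓ - m) * ((stirling1 ℓ m : ℤ) : F) * lam ^ j * (j : F) ^ n := by
      have hinner : ∀ m ∈ Finset.range (ℓ + 1),
          (∑ j ∈ Finset.range (m + 1),
            (m.choose j : F) * α ^ (ℓ - m) * ((stirling1 ℓ m : ℤ) : F) * lam ^ j * (j : F) ^ n)
          = ∑ j ∈ Finset.range (k + 1),
            (m.choose j : F) * α ^ (ℓ - m) * ((stirling1 ℓ m : ℤ) : F) * lam ^ j * (j : F) ^ n := by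
        intro m hm
        have hmk : m + 1 ≤ k + 1 := by
          have := Finset.mem_range.mp hm; omega
        rw [Finset.sum_subset (Finset.range_subset_range.mpr hmk)]
        intro j _ hj
        have : m < j := by simp only [Finset.mem_range] at *; omega
        rw [Nat.choose_eq_zero_of_lt this]
        simp
      rw [Finset.sum_congr rfl hinner,
        Finset.sum_subset (Finset.range_subset_range.mpr (by omega : ℓ + 1 ≤ k + 1))]
      intro m _ hm
      have : ℓ < m := by simp only [Finset.mem_range] at *; omega
      rw [stirling1_eq_zero ℓ m this]
      simp
    rw [hS]
    simp only [← Finset.mul_sum]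
    have hf : (ℓ.factorial : F) ≠ 0 := Nat.cast_ne_zero.mpr (Nat.factorial_ne_zero ℓ)
    field_simp
  rw [Finset.sum_congr rfl step1]
  have swap1 : ∀ ℓ ∈ Finset.range (k + 1),
      (∑ m ∈ Finset.range (k + 1), ∑ j ∈ Finset.range (k + 1),
        degFall α (-1) (k - ℓ) * (k.choose ℓ : F)
          * ((m.choose j : F) * α ^ (ℓ - m) * ((stirling1 ℓ m : ℤ) : F) * lam ^ j * (j : F) ^ n))
      = ∑ j ∈ Finset.range (k + 1), ∑ m ∈ Finset.range (k + 1),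
        degFall α (-1) (k - ℓ) * (k.choose ℓ : F)
          * ((m.choose j : F) * α ^ (ℓ - m) * ((stirling1 ℓ m : ℤ) : F) * lam ^ j * (j : F) ^ n) :=
    fun ℓ _ => Finset.sum_comm
  rw [Finset.sum_congr rfl swap1, Finset.sum_comm]
  apply Finset.sum_congr rfl
  intro j hj
  rw [key_ident α k j (Finset.mem_range.mp hj), Finset.sum_mul, Finset.sum_mul]
  apply Finset.sum_congr rfl
  intro ℓ _
  rw [Finset.sum_mul, Finset.sum_mul]
  apply Finset.sum_congr rfl
  intro m _
  ring
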